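/- Let χ = aχ₀ + bψ₁ + cψ be a character of G_y with c = 0, a ≠ 0 and b ≠ 0. Then [χ] ∈ Σ¹(G_y); that is, for any finite generating set S of G_y, the full subgraph of the Cayley graph Γ(G_y, S) spanned by the elements h with χ(h) ≥ 0 is connected. -/

import Mathlib

namespace LodhaMoore

/-- Infinite binary sequences `2^ℕ`. -/
abbrev Seq : Type := ℕ → Bool

/-- The underlying function of the basic bijection `x`:
`00η ↦ 0η`, `01η ↦ 10η`, `1η ↦ 11η` (reading `false` as `0` and `true` as `1`). -/
def xFun (ξ : Seq) : Seq := fun n =>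
  if ξ 0 then
    match n with
    | 0 => true
    | 1 => true
    | n+2 => ξ (n+1)
  else if ξ 1 then
    match n with
    | 0 => true
    | 1 => false
    | n+2 => ξ (n+2)
  else
    match n with
    | 0 => false
    | n+1 => ξ (n+2)

/-- The inverse of `xFun`: `0η ↦ 00η`, `10η ↦ 01η`, `11η ↦ 1η`. -/
def xInv (ξ : Seq) : Seq := fun n =>
  if ξ 0 then
    if ξ 1 then
      match n with
      | 0 => true
      | n+1 => ξ (n+2)
    else
      match n with
      | 0 => false
      | 1 => true
      | n+2 => ξ (n+2)
  else
    match n with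
    | 0 => false
    | 1 => false
    | n+2 => ξ (n+1)

/-- `yAux true n ξ` is the `n`-th bit of `ξ.y`, and `yAux false n ξ` is the `n`-th bit of
`ξ.y⁻¹`, where `y` is defined by `00η ↦ 0(η.y)`, `01η ↦ 10(η.y⁻¹)`, `1η ↦ 11(η.y)`,
so `y⁻¹` is given by `0η ↦ 00(η.y⁻¹)`, `10η ↦ 01(η.y)`, `11η ↦ 1(η.y⁻¹)`. -/
def yAux : Bool → ℕ → Seq → Bool
  | true, 0, ξ => if ξ 0 then true else if ξ 1 then true else false
  | true, 1, ξ => if ξ 0 then true else if ξ 1 then false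
      else yAux true 0 (fun k => ξ (k+2))
  | true, n+2, ξ =>
      if ξ 0 then yAux true n (fun k => ξ (k+1))
      else if ξ 1 then yAux false n (fun k => ξ (k+2))
      else yAux true (n+1) (fun k => ξ (k+2))
  | false, 0, ξ => if ξ 0 then (if ξ 1 then true else false) else false
  | false, 1, ξ => if ξ 0 then (if ξ 1 then yAux false 0 (fun k => ξ (k+2)) else true)
      else false
  | false, n+2, ξ =>
      if ξ 0 then
        (if ξ 1 then yAux false (n+1) (fun k => ξ (k+2))
         else yAux true n (fun k => ξ (k+2)))
      else yAux false n (fun k => ξ (k+1))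

lemma yAux_inv (n : ℕ) :
    ∀ ξ : Seq, (yAux false n (fun k => yAux true k ξ) = ξ n) ∧
      (yAux true n (fun k => yAux false k ξ) = ξ n) := by
  induction n using Nat.strong_induction_on with
  | _ n IH =>
    intro ξ
    constructor
    · cases h0 : ξ 0 <;> cases h1 : ξ 1 <;> rcases n with _ | _ | n <;>
        simp [yAux, h0, h1]
      · have e : (fun k => yAux true (k+1) ξ) = fun k => yAux true k (fun j => ξ (j+2)) :=
          funext fun k => by cases k <;> simp [yAux, h0, h1]
        rw [e]; exact (IH n (by omega) _).1
      · exact (IH n (by omega) _).2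
      · intro h2 h3; simp_all
      · exact (IH (n+1) (by omega) _).1
      · exact (IH (n+1) (by omega) _).1
    · cases h0 : ξ 0 <;> cases h1 : ξ 1 <;> rcases n with _ | _ | n <;>
        simp [yAux, h0, h1]
      · exact (IH (n+1) (by omega) _).2
      · cases h2 : ξ 2 <;> simp [h2]
      · exact (IH (n+1) (by omega) _).2
      · exact (IH n (by omega) _).1
      · have e : (fun k => yAux false (k+1) ξ) = fun k => yAux false k (fun j => ξ (j+2)) :=
          funext fun k => by cases k <;> simp [yAux, h0, h1]
        rw [e]; exact (IH n (by omega) _).2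

/-- The basic bijection `x` of `2^ℕ`. -/
def xPerm : Equiv.Perm Seq where
  toFun := xFun
  invFun := xInv
  left_inv := by
    intro ξ
    funext n
    cases h0 : ξ 0 <;> cases h1 : ξ 1 <;>
      rcases n with _ | _ | n <;>
      simp [xFun, xInv, h0, h1]
  right_inv := by
    intro ξ
    funext n
    cases h0 : ξ 0 <;> cases h1 : ξ 1 <;>
      rcases n with _ | _ | n <;>
      simp [xFun, xInv, h0, h1]

/-- The basic bijection `y` of `2^ℕ`. -/
def yPerm : Equiv.Perm Seq where
  toFun ξ := fun n => yAux true n ξ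
  invFun ξ := fun n => yAux false n ξ
  left_inv ξ := funext fun n => (yAux_inv n ξ).1
  right_inv ξ := funext fun n => (yAux_inv n ξ).2

/-- Prepend a finite word to an infinite sequence. -/
def append (s : List Bool) (ξ : Seq) : Seq := fun n =>
  if h : n < s.length then s.get ⟨n, h⟩ else ξ (n - s.length)

/-- Drop the first `k` letters of an infinite sequence. -/
def dropN (k : ℕ) (ξ : Seq) : Seq := fun n => ξ (n + k)

/-- `hasPrefix s ξ` iff the finite word `s` is a prefix of `ξ`. -/
def hasPrefix (s : List Bool) (ξ : Seq) : Prop := ∀ i : Fin s.length, ξ i = s.get i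

instance (s : List Bool) (ξ : Seq) : Decidable (hasPrefix s ξ) := by
  unfold hasPrefix; infer_instance

lemma hasPrefix_append (s : List Bool) (ξ : Seq) : hasPrefix s (append s ξ) := by
  intro i
  simp [append, i.isLt]

lemma dropN_append (s : List Bool) (ξ : Seq) : dropN s.length (append s ξ) = ξ := by
  funext n
  simp [dropN, append, Nat.not_lt.2 (Nat.le_add_left _ _)]

lemma append_dropN {s : List Bool} {ξ : Seq} (h : hasPrefix s ξ) :
    append s (dropN s.length ξ) = ξ := by
  funext n
  by_cases h' : n < s.length
  · simpa [append, h'] using (h ⟨n, h'⟩).symm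
  · simp [append, h', dropN, Nat.sub_add_cancel (Nat.le_of_not_lt h')]

/-- The bijection of `2^ℕ` acting as the bijection `f` "at the address `s`":
`sη ↦ s(η.f)`, and `ξ ↦ ξ` if `s` is not a prefix of `ξ`. -/
def localize (s : List Bool) (f : Equiv.Perm Seq) : Equiv.Perm Seq where
  toFun ξ := if hasPrefix s ξ then append s (f (dropN s.length ξ)) else ξ
  invFun ξ := if hasPrefix s ξ then append s (f.symm (dropN s.length ξ)) else ξ
  left_inv := by
    intro ξ
    by_cases h : hasPrefix s ξ
    · simp [h, hasPrefix_append, dropN_append, append_dropN h]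
    · simp [h]
  right_inv := by
    intro ξ
    by_cases h : hasPrefix s ξ
    · simp [h, hasPrefix_append, dropN_append, append_dropN h]
    · simp [h]

/-- The group of bijections of `2^ℕ`.  Composition is written so that in a product `g * h`
the factor `g` acts first: bijections act on the right, as in Lodha--Moore's paper. -/
abbrev M : Type := (Equiv.Perm Seq)ᵐᵒᵖ

/-- The generator `x_s`, `s ∈ 2^{<ℕ}` (a finite binary sequence, i.e. a `List Bool`). -/
def px (s : List Bool) : M := MulOpposite.op (localize s xPerm)

/-- The generator `y_s`, `s ∈ 2^{<ℕ}`. -/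
def py (s : List Bool) : M := MulOpposite.op (localize s yPerm)

/-- `t` is a word of the form `0^n`, `n ≥ 0`. -/
def allFalse (t : List Bool) : Prop := ∀ b ∈ t, b = false

/-- `t` is a word of the form `1^n`, `n ≥ 0`. -/
def allTrue (t : List Bool) : Prop := ∀ b ∈ t, b = true

instance (t : List Bool) : Decidable (allFalse t) := by unfold allFalse; infer_instance
instance (t : List Bool) : Decidable (allTrue t) := by unfold allTrue; infer_instance

/-- Addresses allowed for the `y`-generators of the Lodha–Moore group `G`. -/
def gSet : Set (List Bool) := {t | ¬ allFalse t ∧ ¬ allTrue t}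
/-- Addresses allowed for the `y`-generators of the Lodha–Moore group `G_y`. -/
def gySet : Set (List Bool) := {t | ¬ allFalse t}
/-- Addresses allowed for the `y`-generators of the Lodha–Moore group `yG`. -/
def ygSet : Set (List Bool) := {t | ¬ allTrue t}
/-- Addresses allowed for the `y`-generators of the Lodha–Moore group `yGy`. -/
def ygySet : Set (List Bool) := Set.univ

/-- The Lodha–Moore style group with `y`-generators allowed at the addresses in `A`. -/
def LM (A : Set (List Bool)) : Subgroup M :=
  Subgroup.closure (Set.range px ∪ py '' A)

/-- The Lodha–Moore group `G`. -/
def G : Subgroup M := LM gSet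
/-- The Lodha–Moore group `G_y`. -/
def Gy : Subgroup M := LM gySet
/-- The Lodha–Moore group `yG`. -/
def yG : Subgroup M := LM ygSet
/-- The Lodha–Moore group `yGy`. -/
def yGy : Subgroup M := LM ygySet

/-- The semi-deferred subgroup `H(s)` of the Lodha–Moore group `H = LM A`: the subgroup
generated by those generators of `H` whose address has `s` as a prefix. -/
def LMdef (A : Set (List Bool)) (s : List Bool) : Subgroup M :=
  Subgroup.closure ((px '' {t | s <+: t}) ∪ (py '' {t | t ∈ A ∧ s <+: t}))

lemma px_mem (A : Set (List Bool)) (s : List Bool) : px s ∈ LM A :=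
  Subgroup.subset_closure (Or.inl ⟨s, rfl⟩)

lemma py_mem {A : Set (List Bool)} {s : List Bool} (h : s ∈ A) : py s ∈ LM A :=
  Subgroup.subset_closure (Or.inr ⟨s, h, rfl⟩)

lemma px_mem_def (A : Set (List Bool)) {s t : List Bool} (h : s <+: t) :
    px t ∈ LMdef A s :=
  Subgroup.subset_closure (Or.inl ⟨t, h, rfl⟩)

lemma py_mem_def {A : Set (List Bool)} {s t : List Bool} (h1 : t ∈ A) (h2 : s <+: t) :
    py t ∈ LMdef A s :=
  Subgroup.subset_closure (Or.inr ⟨t, ⟨h1, h2⟩, rfl⟩)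

/-- The conjugate subgroup `z B z⁻¹`. -/
def conjSubgroup {H : Type*} [Group H] (z : H) (B : Subgroup H) : Subgroup H :=
  B.map (MulAut.conj z).toMonoidHom

/-- The `MulEquiv` `φ.range ≃* ⊤` used to define an ascending HNN extension. -/
noncomputable def ascEquiv {B : Type*} [Group B] (φ : B →* B) (hφ : Function.Injective φ) :
    (φ.range : Subgroup B) ≃* (⊤ : Subgroup B) :=
  (MonoidHom.ofInjective hφ).symm.trans Subgroup.topEquiv.symm

/-- The ascending HNN extension `B*_{φ,t} = ⟨B, t ∣ t⁻¹ b t = φ(b) for all b ∈ B⟩` of the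
group `B` along the injective endomorphism `φ`.  (In `HNNExtension B φ.range ⊤ (ascEquiv φ hφ)`
the defining relation is exactly `t⁻¹ * of b * t = of (φ b)` for all `b : B`.) -/
noncomputable abbrev AscHNN {B : Type*} [Group B] (φ : B →* B)
    (hφ : Function.Injective φ) : Type _ :=
  HNNExtension B φ.range ⊤ (ascEquiv φ hφ)


/-- `f : H → R` is a homomorphism from the (multiplicative) group `H` to the additive
group `R`, i.e. a character when `R = ℝ` (discrete when `R = ℤ`). -/
def IsAddChar {H : Type*} [Group H] {R : Type*} [Add R] (f : H → R) : Prop :=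
  ∀ a b, f (a * b) = f a + f b

/-- `f` is the character `χ₀` of the Lodha–Moore group `LM A`:
`χ₀(x_{0^n}) = -1`, `χ₀(x_s) = 0` for `s` not of the form `0^n`, `χ₀(y_s) = 0`. -/
def Chi0Spec (A : Set (List Bool)) {R : Type*} [Add R] [Neg R] [One R] [Zero R]
    (f : ↥(LM A) → R) : Prop :=
  IsAddChar f ∧ (∀ s, allFalse s → f ⟨px s, px_mem A s⟩ = -1) ∧
    (∀ s, ¬ allFalse s → f ⟨px s, px_mem A s⟩ = 0) ∧
    ∀ (s) (h : s ∈ A), f ⟨py s, py_mem h⟩ = 0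

/-- `f` is the character `χ₁` of the Lodha–Moore group `LM A`:
`χ₁(x_{1^n}) = 1`, `χ₁(x_s) = 0` for `s` not of the form `1^n`, `χ₁(y_s) = 0`. -/
def Chi1Spec (A : Set (List Bool)) {R : Type*} [Add R] [One R] [Zero R]
    (f : ↥(LM A) → R) : Prop :=
  IsAddChar f ∧ (∀ s, allTrue s → f ⟨px s, px_mem A s⟩ = 1) ∧
    (∀ s, ¬ allTrue s → f ⟨px s, px_mem A s⟩ = 0) ∧
    ∀ (s) (h : s ∈ A), f ⟨py s, py_mem h⟩ = 0

/-- `f` is the character `ψ₀` of the Lodha–Moore group `LM A`: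
`ψ₀(y_{0^n}) = 1`, `ψ₀(y_s) = 0` for `s` not of the form `0^n`, `ψ₀(x_s) = 0`. -/
def Psi0Spec (A : Set (List Bool)) {R : Type*} [Add R] [One R] [Zero R]
    (f : ↥(LM A) → R) : Prop :=
  IsAddChar f ∧ (∀ s, f ⟨px s, px_mem A s⟩ = 0) ∧
    (∀ (s) (h : s ∈ A), allFalse s → f ⟨py s, py_mem h⟩ = 1) ∧
    ∀ (s) (h : s ∈ A), ¬ allFalse s → f ⟨py s, py_mem h⟩ = 0

/-- `f` is the character `ψ₁` of the Lodha–Moore group `LM A`: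
`ψ₁(y_{1^n}) = 1`, `ψ₁(y_s) = 0` for `s` not of the form `1^n`, `ψ₁(x_s) = 0`. -/
def Psi1Spec (A : Set (List Bool)) {R : Type*} [Add R] [One R] [Zero R]
    (f : ↥(LM A) → R) : Prop :=
  IsAddChar f ∧ (∀ s, f ⟨px s, px_mem A s⟩ = 0) ∧
    (∀ (s) (h : s ∈ A), allTrue s → f ⟨py s, py_mem h⟩ = 1) ∧
    ∀ (s) (h : s ∈ A), ¬ allTrue s → f ⟨py s, py_mem h⟩ = 0

/-- `f` is the character `ψ` of the Lodha–Moore group `LM A`: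
`ψ(y_s) = 1` and `ψ(x_s) = 0` for all `s`. -/
def PsiSpec (A : Set (List Bool)) {R : Type*} [Add R] [One R] [Zero R]
    (f : ↥(LM A) → R) : Prop :=
  IsAddChar f ∧ (∀ s, f ⟨px s, px_mem A s⟩ = 0) ∧
    ∀ (s) (h : s ∈ A), f ⟨py s, py_mem h⟩ = 1

/-- The full subgraph of the Cayley graph `Γ(H, S)` spanned by the vertices `h`
with `0 ≤ χ h`. -/
def posSubgraph {H : Type*} [Group H] (S : Set H) (χ : H → ℝ) :
    SimpleGraph {h : H // 0 ≤ χ h} where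
  Adj a b := a ≠ b ∧ ∃ s, (s ∈ S ∨ s⁻¹ ∈ S) ∧ (b : H) = (a : H) * s
  symm := by
    refine ⟨?_⟩
    rintro a b ⟨hne, s, hs, hb⟩
    refine ⟨hne.symm, s⁻¹, ?_, ?_⟩
    · rcases hs with h | h
      · exact Or.inr (by simpa using h)
      · exact Or.inl h
    · rw [hb]; group
  loopless := ⟨fun a h => h.1 rfl⟩


/-!
Say that `g` is reachable above `r` (`ConeReach S χ r g`) if a path in the Cayley graph from
`1` to `g` keeps `χ ≥ r`. Every element is reachable above some level, and connectedness of the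
subgraph `χ ≥ 0` means that every `g` with `χ g ≥ 0` is reachable above `0`. If `z` is
reachable above `0`, `χ z > 0`, and `z` commutes with `h`, then for large `K` the path `z^K`,
then `h`, then `z^{-K}` shows that `h` is reachable above `0`.

For `G_y` and `χ = aχ₀ + bψ₁`, first build such a `z` supported in the cone at `0`: conjugate
`x_{0^R}^σ` (with `χ(x_{0^R}^σ) > 0`) by a large power of a positive reachable element, with `R`
so large that the conjugate is still supported in the cone at `0`. Since `x_0 y_1^t` conjugates
`x_{0^R}` to `x_{0^{R+1}}` and `χ(x_0 y_1^t) > 0` for a suitable `t`, the element `x_{0^R}^σ` is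
reachable above a level that does not depend on `R`. Hence everything supported in the cone at
`1` is reachable. So is everything with trivial germ at `1^∞`, since it commutes with a power of
some `y_{1^T}`. Finally, every element of `G_y` has at `1^∞` the germ of an element supported in
the cone at `1`, and this splits it into two pieces of these two kinds.
-/

open Filter Topology PiNat Set

namespace IsAddChar

variable {Γ : Type*} [Group Γ] {χ : Γ → ℝ} (hχ : IsAddChar χ)
include hχ

lemma map_one : χ 1 = 0 := by
  have := hχ 1 1
  rw [mul_one] at this
  linarith

lemma map_inv (g : Γ) : χ g⁻¹ = -χ g := by
  have := hχ g g⁻¹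
  rw [mul_inv_cancel, hχ.map_one] at this
  linarith

lemma map_pow (g : Γ) (n : ℕ) : χ (g ^ n) = n * χ g := by
  induction n with
  | zero => simp [hχ.map_one]
  | succ n ih => rw [pow_succ, hχ, ih]; push_cast; ring

lemma map_zpow (g : Γ) (n : ℤ) : χ (g ^ n) = n * χ g := by
  cases n with
  | ofNat n => simpa using hχ.map_pow g n
  | negSucc n => rw [zpow_negSucc, hχ.map_inv, hχ.map_pow]; push_cast; ring

lemma map_conj (g h : Γ) : χ (h * g * h⁻¹) = χ g := by
  rw [hχ, hχ, hχ.map_inv]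
  ring

end IsAddChar

lemma exists_int_lt_mul {b : ℝ} (hb : b ≠ 0) (c : ℝ) : ∃ t : ℤ, c < t * b := by
  rcases hb.lt_or_gt with hb | hb
  · obtain ⟨t, ht⟩ := exists_int_lt (c / b)
    exact ⟨t, (lt_div_iff_of_neg hb).1 ht⟩
  · obtain ⟨t, ht⟩ := exists_int_gt (c / b)
    exact ⟨t, (div_lt_iff₀ hb).1 ht⟩

section ConeReach

variable {Γ : Type*} [Group Γ] (S : Set Γ) (χ : Γ → ℝ)

def ConeStep (r : ℝ) (g h : Γ) : Prop :=
  r ≤ χ g ∧ r ≤ χ h ∧ ∃ s, (s ∈ S ∨ s⁻¹ ∈ S) ∧ h = g * s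

def ConeReach (r : ℝ) (g : Γ) : Prop :=
  Relation.ReflTransGen (ConeStep S χ r) 1 g

variable {S χ} {r r₁ r₂ : ℝ} {g h z : Γ}

lemma ConeStep.symm (hgh : ConeStep S χ r g h) : ConeStep S χ r h g := by
  obtain ⟨hg, hh, s, hs, rfl⟩ := hgh
  exact ⟨hh, hg, s⁻¹, by rwa [inv_inv, or_comm], by group⟩

lemma ConeStep.mono (hr : r₁ ≤ r₂) (hgh : ConeStep S χ r₂ g h) : ConeStep S χ r₁ g h :=
  ⟨hr.trans hgh.1, hr.trans hgh.2.1, hgh.2.2⟩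

lemma ConeStep.mul_left (hχ : IsAddChar χ) (k : Γ) (hgh : ConeStep S χ r g h) :
    ConeStep S χ (χ k + r) (k * g) (k * h) := by
  obtain ⟨hg, hh, s, hs, rfl⟩ := hgh
  exact ⟨by rw [hχ]; linarith, by rw [hχ]; linarith, s, hs, by group⟩

lemma ConeReach.mono (hr : r₁ ≤ r₂) (hg : ConeReach S χ r₂ g) : ConeReach S χ r₁ g :=
  Relation.ReflTransGen.mono (fun _ _ => ConeStep.mono hr) _ _ hg

lemma ConeReach.mul (hχ : IsAddChar χ) (hg : ConeReach S χ r₁ g) (hh : ConeReach S χ r₂ h)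
    (h₁ : r ≤ r₁) (h₂ : r ≤ χ g + r₂) : ConeReach S χ r (g * h) := by
  have hgh : Relation.ReflTransGen (ConeStep S χ (χ g + r₂)) (g * 1) (g * h) :=
    hh.lift (g * ·) fun _ _ => ConeStep.mul_left hχ g
  rw [mul_one] at hgh
  exact (hg.mono h₁).trans (Relation.ReflTransGen.mono (fun _ _ => ConeStep.mono h₂) _ _ hgh)

lemma ConeReach.inv (hχ : IsAddChar χ) (hg : ConeReach S χ r g) :
    ConeReach S χ (r - χ g) g⁻¹ := by
  have hg' : Relation.ReflTransGen (ConeStep S χ (χ g⁻¹ + r)) (g⁻¹ * 1) (g⁻¹ * g) :=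
    hg.lift (g⁻¹ * ·) fun _ _ => ConeStep.mul_left hχ g⁻¹
  rw [mul_one, inv_mul_cancel, hχ.map_inv, neg_add_eq_sub] at hg'
  exact Relation.ReflTransGen.mono (fun _ _ => ConeStep.symm) _ _
    (Relation.reflTransGen_swap.2 hg')

lemma ConeReach.of_letter (hχ : IsAddChar χ) {s : Γ} (hs : s ∈ S ∨ s⁻¹ ∈ S) :
    ConeReach S χ (min 0 (χ s)) s :=
  .single ⟨by simp [hχ.map_one], min_le_right _ _, s, hs, (one_mul s).symm⟩

lemma exists_coneReach (hχ : IsAddChar χ) (hS : Subgroup.closure S = ⊤) (g : Γ) :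
    ∃ r, ConeReach S χ r g := by
  induction (hS ▸ Subgroup.mem_top g : g ∈ Subgroup.closure S) using
    Subgroup.closure_induction with
  | mem s hs => exact ⟨_, .of_letter hχ (.inl hs)⟩
  | one => exact ⟨0, .refl⟩
  | mul g h _ _ hg hh =>
    obtain ⟨r₁, hg⟩ := hg
    obtain ⟨r₂, hh⟩ := hh
    exact ⟨_, hg.mul hχ hh (min_le_left r₁ (χ g + r₂)) (min_le_right _ _)⟩
  | inv g _ hg =>
    obtain ⟨r, hg⟩ := hg
    exact ⟨_, hg.inv hχ⟩

/-- If `χ` vanished on all letters it would vanish on `⟨S⟩ = Γ`. -/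
lemma exists_coneReach_pos (hχ : IsAddChar χ) (hS : Subgroup.closure S = ⊤) (hg : χ g ≠ 0) :
    ∃ z, ConeReach S χ 0 z ∧ 0 < χ z := by
  by_contra! hneg
  have hletter : ∀ s, (s ∈ S ∨ s⁻¹ ∈ S) → χ s ≤ 0 := fun s hs => by
    by_contra! hpos
    linarith [hneg s (by simpa [hpos.le] using ConeReach.of_letter hχ hs)]
  refine hg ?_
  clear hg
  induction (hS ▸ Subgroup.mem_top g : g ∈ Subgroup.closure S) using
    Subgroup.closure_induction with
  | mem s hs =>
    have h₁ := hletter s (.inl hs)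
    have h₂ := hletter s⁻¹ (.inr (by rwa [inv_inv]))
    rw [hχ.map_inv] at h₂
    linarith
  | one => exact hχ.map_one
  | mul g h _ _ hg hh => rw [hχ, hg, hh, add_zero]
  | inv g _ hg => rw [hχ.map_inv, hg, neg_zero]

lemma ConeReach.pow (hχ : IsAddChar χ) (hg : ConeReach S χ r g) (hg0 : 0 ≤ χ g) (n : ℕ) :
    ConeReach S χ r (g ^ n) := by
  induction n with
  | zero => rw [pow_zero]; exact .refl
  | succ n ih => rw [pow_succ']; exact hg.mul hχ ih le_rfl (by linarith)

/-- The elevator: climb with `z ^ K`, walk along `h`, and come back down with `z ^ (-K)`. -/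
lemma ConeReach.pow_mul_mul_inv (hχ : IsAddChar χ) (hz : ConeReach S χ 0 z) (hz0 : 0 ≤ χ z)
    (hh : ConeReach S χ r h) (hh0 : 0 ≤ χ h) {K : ℕ} (hK : 0 ≤ K * χ z + r) :
    ConeReach S χ 0 (z ^ K * h * (z ^ K)⁻¹) := by
  have hzK := hz.pow hχ hz0 K
  have hχzK := hχ.map_pow z K
  refine (hzK.mul hχ hh le_rfl (by linarith)).mul hχ (hzK.inv hχ) le_rfl ?_
  rw [hχ]
  linarith

lemma ConeReach.of_commute (hχ : IsAddChar χ) (hS : Subgroup.closure S = ⊤)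
    (hz : ConeReach S χ 0 z) (hz0 : 0 < χ z) (hzh : Commute z h) (hh0 : 0 ≤ χ h) :
    ConeReach S χ 0 h := by
  obtain ⟨r, hr⟩ := exists_coneReach hχ hS h
  obtain ⟨K, hK⟩ := Archimedean.arch (-r) hz0
  rw [nsmul_eq_mul] at hK
  have := hz.pow_mul_mul_inv hχ hz0.le hr hh0 (K := K) (by linarith)
  rwa [(hzh.pow_left K).eq, mul_inv_cancel_right] at this

lemma exists_coneReach_pow_mul_mul_inv (hχ : IsAddChar χ) {p θ : Γ} {rp rθ : ℝ}
    (hp : ConeReach S χ rp p) (hp0 : 0 ≤ χ p) (hθ : ConeReach S χ rθ θ) :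
    ∃ B, ∀ i : ℕ, ConeReach S χ B (p ^ i * θ * (p ^ i)⁻¹) := by
  refine ⟨min (min rp rθ) (χ θ + rp), fun i => ?_⟩
  have hpi := hp.pow hχ hp0 i
  have hχpi : 0 ≤ χ (p ^ i) := by rw [hχ.map_pow]; positivity
  refine (hpi.mul hχ hθ (min_le_left _ _) ?_).mul hχ (hpi.inv hχ) (min_le_left _ _) ?_
  · linarith [min_le_right rp rθ]
  · rw [hχ]
    linarith [min_le_right (min rp rθ) (χ θ + rp)]

lemma ConeReach.min_of_forall_mem (hχ : IsAddChar χ) {H : Subgroup Γ}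
    (hH : ∀ x ∈ H, 0 ≤ χ x → ConeReach S χ 0 x) (hg : g ∈ H) :
    ConeReach S χ (min 0 (χ g)) g := by
  rcases le_or_gt 0 (χ g) with hg0 | hg0
  · rw [min_eq_left hg0]
    exact hH g hg hg0
  · have hinv := (hH g⁻¹ (H.inv_mem hg) (by rw [hχ.map_inv]; linarith)).inv hχ
    rwa [inv_inv, hχ.map_inv, zero_sub, neg_neg, ← min_eq_right hg0.le] at hinv

lemma ConeReach.mul_of_forall_mem (hχ : IsAddChar χ) {H : Subgroup Γ}
    (hH : ∀ x ∈ H, 0 ≤ χ x → ConeReach S χ 0 x) (hg : ConeReach S χ 0 g)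
    (hg0 : 0 ≤ χ g) (hh : h ∈ H) (hgh : 0 ≤ χ (g * h)) : ConeReach S χ 0 (g * h) := by
  refine hg.mul hχ (ConeReach.min_of_forall_mem hχ hH hh) le_rfl ?_
  rw [hχ] at hgh
  rcases min_cases 0 (χ h) with ⟨hmin, -⟩ | ⟨hmin, -⟩ <;> rw [hmin] <;> linarith

lemma posSubgraph_connected_of_coneReach (hχ : IsAddChar χ)
    (hreach : ∀ g, 0 ≤ χ g → ConeReach S χ 0 g) : (posSubgraph S χ).Connected := by
  have h1 : 0 ≤ χ 1 := hχ.map_one.ge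
  have hpath : ∀ g (hg : 0 ≤ χ g), (posSubgraph S χ).Reachable ⟨1, h1⟩ ⟨g, hg⟩ := by
    intro g hg
    induction hreach g hg with
    | refl => rfl
    | tail _ hstep ih =>
      obtain ⟨hb, -, s, hs, rfl⟩ := hstep
      by_cases hs1 : s = 1
      · subst hs1
        simpa using ih hb
      · refine (ih hb).trans (SimpleGraph.Adj.reachable ⟨?_, s, hs, rfl⟩)
        simpa [Subtype.ext_iff] using hs1
  exact (SimpleGraph.connected_iff _).2
    ⟨fun u v => (hpath u u.2).symm.trans (hpath v v.2), ⟨⟨1, h1⟩⟩⟩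

end ConeReach

section Sequences

def consS (b : Bool) (ξ : Seq) : Seq := fun
  | 0 => b
  | n + 1 => ξ n

@[simp] lemma consS_zero (b : Bool) (ξ : Seq) : consS b ξ 0 = b := rfl
@[simp] lemma consS_succ (b : Bool) (ξ : Seq) (n : ℕ) : consS b ξ (n + 1) = ξ n := rfl

lemma append_cons (c : Bool) (s : List Bool) (ξ : Seq) :
    append (c :: s) ξ = consS c (append s ξ) := by
  funext n
  rcases n with _ | n
  · simp [append]
  · by_cases h : n < s.length
    · simp [append, h]
    · simp [append, h, Nat.succ_sub_succ]

def rep (b : Bool) (n : ℕ) (η : Seq) : Seq := append (List.replicate n b) η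

variable {b : Bool} {n N : ℕ} {ξ η : Seq}

@[simp] lemma rep_zero (b : Bool) (η : Seq) : rep b 0 η = η := by
  funext n
  simp [rep, append]

lemma rep_succ (b : Bool) (n : ℕ) (η : Seq) : rep b (n + 1) η = consS b (rep b n η) :=
  append_cons b _ η

lemma rep_add (b : Bool) (m n : ℕ) (η : Seq) : rep b (m + n) η = rep b m (rep b n η) := by
  induction m with
  | zero => simp
  | succ m ih => rw [Nat.add_right_comm, rep_succ, rep_succ, ih]

lemma hasPrefix_replicate_iff :
    hasPrefix (List.replicate n b) ξ ↔ ξ ∈ cylinder (fun _ => b) n := by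
  simp [hasPrefix, mem_cylinder_iff, Fin.forall_iff]

lemma hasPrefix_replicate_subset_cylinder (h : n ≤ N) :
    {ξ | hasPrefix (List.replicate N b) ξ} ⊆ cylinder (fun _ => b) n :=
  fun _ hξ => cylinder_anti _ h (hasPrefix_replicate_iff.1 hξ)

lemma rep_mem_cylinder (h : n ≤ N) (η : Seq) : rep b N η ∈ cylinder (fun _ => b) n :=
  hasPrefix_replicate_subset_cylinder h (hasPrefix_append _ η)

lemma cylinder_const_eq_range (b : Bool) (n : ℕ) :
    cylinder (fun _ => b) n = range (rep b n) := by
  refine Subset.antisymm (fun ξ hξ => ⟨dropN n ξ, ?_⟩)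
    (range_subset_iff.2 (rep_mem_cylinder le_rfl))
  have := append_dropN (hasPrefix_replicate_iff.2 hξ)
  rwa [List.length_replicate] at this

lemma disjoint_cylinder_false_true :
    Disjoint (cylinder (fun _ => false) 1) (cylinder (fun _ => true) 1) :=
  disjoint_left.2 fun ξ h₀ h₁ => by
    simp only [mem_cylinder_iff, Nat.lt_one_iff, forall_eq] at h₀ h₁
    simp [h₀] at h₁

lemma nhds_hasBasis_cylinder (x : Seq) : (𝓝 x).HasBasis (fun _ => True) (cylinder x) := by
  refine ⟨fun s => ⟨fun hs => ?_, fun ⟨n, _, hn⟩ =>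
    mem_of_superset ((isOpen_cylinder _ x n).mem_nhds (self_mem_cylinder x n)) hn⟩⟩
  obtain ⟨_, ⟨y, n, rfl⟩, hx, hs⟩ := (isTopologicalBasis_cylinders _).mem_nhds_iff.1 hs
  exact ⟨n, trivial, by rwa [← mem_cylinder_iff_eq.1 hx] at hs⟩

lemma tendsto_nhds_const_iff {f : Seq → Seq} :
    Tendsto f (𝓝 fun _ => b) (𝓝 fun _ => b) ↔
      ∀ n, ∃ N, ∀ η, f (rep b N η) ∈ cylinder (fun _ => b) n := by
  simp [(nhds_hasBasis_cylinder _).tendsto_iff (nhds_hasBasis_cylinder _),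
    cylinder_const_eq_range b]

lemma eventually_nhds_const_iff {P : Seq → Prop} :
    (∀ᶠ ξ in 𝓝 fun _ => b, P ξ) ↔ ∃ N, ∀ η, P (rep b N η) := by
  simp [(nhds_hasBasis_cylinder _).eventually_iff, cylinder_const_eq_range]

lemma xPerm_rep_false (n : ℕ) (η : Seq) :
    xPerm (rep false (n + 2) η) = rep false (n + 1) η := by
  simp only [rep_succ]
  funext k
  rcases k with _ | _ | k <;> rfl

lemma xPerm_rep_true (n : ℕ) (η : Seq) : xPerm (rep true (n + 1) η) = rep true (n + 2) η := by
  simp only [rep_succ]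
  funext k
  rcases k with _ | _ | k <;> rfl

lemma yPerm_consS_true (ξ : Seq) :
    yPerm (consS true ξ) = consS true (consS true (yPerm ξ)) := by
  funext k
  rcases k with _ | _ | k <;> simp [yPerm, yAux]

lemma yPerm_rep_true (n : ℕ) (η : Seq) :
    yPerm (rep true n η) = rep true (2 * n) (yPerm η) := by
  induction n with
  | zero => simp
  | succ n ih => rw [rep_succ, yPerm_consS_true, ih, Nat.mul_succ, rep_succ, rep_succ]

lemma yPerm_symm_rep_true (n : ℕ) (η : Seq) :
    yPerm.symm (rep true (2 * n) η) = rep true n (yPerm.symm η) := by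
  rw [Equiv.symm_apply_eq, yPerm_rep_true, Equiv.apply_symm_apply]

lemma localize_append (s : List Bool) (f : Equiv.Perm Seq) (η : Seq) :
    localize s f (append s η) = append s (f η) := by
  simp [localize, hasPrefix_append, dropN_append]

lemma localize_of_not_hasPrefix {s : List Bool} (f : Equiv.Perm Seq) (h : ¬ hasPrefix s ξ) :
    localize s f ξ = ξ := by
  simp [localize, h]

lemma localize_symm (s : List Bool) (f : Equiv.Perm Seq) :
    (localize s f).symm = localize s f.symm :=
  Equiv.ext fun _ => rfl

lemma localize_rep (f : Equiv.Perm Seq) (j n : ℕ) (η : Seq) :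
    localize (List.replicate j b) f (rep b (j + n) η) = rep b j (f (rep b n η)) := by
  rw [rep_add]
  exact localize_append _ f _

lemma localize_eventuallyEq_id {s : List Bool} (hs : ¬ ∀ c ∈ s, c = b) (f : Equiv.Perm Seq) :
    localize s f =ᶠ[𝓝 fun _ => b] id := by
  refine eventually_nhds_const_iff.2
    ⟨s.length, fun η => localize_of_not_hasPrefix f fun hp => hs ?_⟩
  intro c hc
  obtain ⟨i, rfl⟩ := List.get_of_mem hc
  rw [← hp i]
  exact mem_cylinder_iff.1 (rep_mem_cylinder le_rfl η) i i.isLt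

end Sequences

section Action

def act (g : M) (ξ : Seq) : Seq := g.unop ξ

variable {g h m : M} {ξ : Seq}

lemma act_mul (g h : M) : act (g * h) = act h ∘ act g := rfl

@[simp] lemma act_inv_act (g : M) (ξ : Seq) : act g⁻¹ (act g ξ) = ξ :=
  Equiv.symm_apply_apply _ _

@[simp] lemma act_act_inv (g : M) (ξ : Seq) : act g (act g⁻¹ ξ) = ξ :=
  Equiv.apply_symm_apply _ _

lemma act_inv_eq_of_act_eq {ζ : Seq} (h : act g ξ = ζ) : act g⁻¹ ζ = ξ := by
  rw [← h, act_inv_act]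

lemma act_op (f : Equiv.Perm Seq) : act (MulOpposite.op f) = f := rfl

lemma act_op_inv (f : Equiv.Perm Seq) : act (MulOpposite.op f)⁻¹ = f.symm := rfl

lemma M.ext (H : ∀ ξ, act g ξ = act h ξ) : g = h :=
  MulOpposite.unop_injective (Equiv.ext H)

lemma act_px_rep_false (j n : ℕ) (η : Seq) :
    act (px (List.replicate j false)) (rep false (j + (n + 2)) η) =
      rep false (j + (n + 1)) η := by
  rw [px, act_op, localize_rep, xPerm_rep_false, ← rep_add]

lemma act_px_rep_true (j n : ℕ) (η : Seq) :
    act (px (List.replicate j true)) (rep true (j + (n + 1)) η) = rep true (j + (n + 2)) η := by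
  rw [px, act_op, localize_rep, xPerm_rep_true, ← rep_add]

lemma act_py_rep_true (j n : ℕ) (η : Seq) :
    act (py (List.replicate j true)) (rep true (j + n) η) = rep true (j + 2 * n) (yPerm η) := by
  rw [py, act_op, localize_rep, yPerm_rep_true, ← rep_add]

lemma act_py_inv_rep_true (j n : ℕ) (η : Seq) :
    act (py (List.replicate j true))⁻¹ (rep true (j + 2 * n) η) =
      rep true (j + n) (yPerm.symm η) := by
  rw [py, act_op_inv, localize_symm, localize_rep, yPerm_symm_rep_true, ← rep_add]

variable {U V : Set Seq} {p : Seq}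

def rigidStabilizer (U : Set Seq) : Subgroup M where
  carrier := {g | ∀ ξ ∉ U, act g ξ = ξ}
  mul_mem' {g h} hg hh ξ hξ := by
    rw [act_mul, Function.comp_apply, hg ξ hξ, hh ξ hξ]
  one_mem' _ _ := rfl
  inv_mem' {g} hg ξ hξ := act_inv_eq_of_act_eq (hg ξ hξ)

lemma rigidStabilizer_mono (hUV : U ⊆ V) : rigidStabilizer U ≤ rigidStabilizer V :=
  fun _ hg ξ hξ => hg ξ fun hU => hξ (hUV hU)

lemma op_localize_mem_rigidStabilizer {s : List Bool} (hs : {ξ | hasPrefix s ξ} ⊆ U)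
    (f : Equiv.Perm Seq) : MulOpposite.op (localize s f) ∈ rigidStabilizer U :=
  fun _ hξ => localize_of_not_hasPrefix f fun hp => hξ (hs hp)

lemma commute_of_mem_rigidStabilizer (hg : g ∈ rigidStabilizer U)
    (hh : ∀ ξ ∈ U, act h ξ = ξ) : Commute g h := by
  refine MulOpposite.commute_unop.1 (Equiv.Perm.Disjoint.commute fun ξ => ?_)
  by_cases hξ : ξ ∈ U
  · exact .inr (hh ξ hξ)
  · exact .inl (hg ξ hξ)

lemma commute_of_disjoint (hg : g ∈ rigidStabilizer U) (hh : h ∈ rigidStabilizer V)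
    (hUV : Disjoint U V) : Commute g h :=
  commute_of_mem_rigidStabilizer hg fun ξ hξ => hh ξ (hUV.notMem_of_mem_left hξ)

lemma mul_mul_inv_mem_rigidStabilizer (hm : m ∈ rigidStabilizer U)
    (hg : MapsTo (act g⁻¹) U V) : g * m * g⁻¹ ∈ rigidStabilizer V := by
  intro ξ hξ
  have : act g ξ ∉ U := fun hU => hξ (by simpa using hg hU)
  simp only [act_mul, Function.comp_apply, hm _ this, act_inv_act]

lemma mul_op_localize_mul_inv {s t : List Bool} (hg : ∀ η, act g (append t η) = append s η)
    (f : Equiv.Perm Seq) :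
    g * MulOpposite.op (localize s f) * g⁻¹ = MulOpposite.op (localize t f) := by
  refine M.ext fun ξ => ?_
  simp only [act_mul, Function.comp_apply, act_op]
  by_cases ht : hasPrefix t ξ
  · rw [← append_dropN ht, hg, localize_append, localize_append, act_inv_eq_of_act_eq (hg _)]
  · have hs : ¬ hasPrefix s (act g ξ) := fun hs => ht <| by
      rw [← act_inv_act g ξ, ← append_dropN hs, act_inv_eq_of_act_eq (hg _)]
      exact hasPrefix_append t _
    rw [localize_of_not_hasPrefix f hs, act_inv_act, localize_of_not_hasPrefix f ht]

/-- The elements `g` such that `g` and `g⁻¹` fix `p` and are continuous at `p`. -/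
def fixingNhds (p : Seq) : Subgroup M where
  carrier := {g | Tendsto (act g) (𝓝 p) (𝓝 p) ∧ Tendsto (act g⁻¹) (𝓝 p) (𝓝 p)}
  mul_mem' {g h} hg hh := ⟨hh.1.comp hg.1, by rw [mul_inv_rev]; exact hg.2.comp hh.2⟩
  one_mem' := ⟨tendsto_id, tendsto_id⟩
  inv_mem' {g} hg := ⟨hg.2, by rw [inv_inv]; exact hg.1⟩

def germTrivial (p : Seq) : Subgroup M where
  carrier := {g | act g =ᶠ[𝓝 p] id}
  mul_mem' {g h} hg hh := by
    filter_upwards [hg, hh] with ξ hgξ hhξ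
    simp [act_mul, hgξ, hhξ]
  one_mem' := EventuallyEq.rfl
  inv_mem' {g} hg := by
    filter_upwards [hg] with ξ hξ
    exact act_inv_eq_of_act_eq hξ

lemma mem_fixingNhds_of_mem_germTrivial (hg : g ∈ germTrivial p) : g ∈ fixingNhds p :=
  ⟨tendsto_id.congr' hg.symm, tendsto_id.congr' ((germTrivial p).inv_mem hg).symm⟩

lemma mul_inv_mem_germTrivial (hgh : act g =ᶠ[𝓝 p] act h) : g * h⁻¹ ∈ germTrivial p := by
  filter_upwards [hgh] with ξ hξ
  simp [act_mul, hξ]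

lemma inv_mul_mem_germTrivial (hh : h ∈ fixingNhds p) (hgh : act g =ᶠ[𝓝 p] act h) :
    h⁻¹ * g ∈ germTrivial p := by
  filter_upwards [hgh.comp_tendsto hh.2] with ξ hξ
  simpa [act_mul] using hξ

def germSubgroup (p : Seq) (D : Subgroup M) : Subgroup M where
  carrier := {g | ∃ c ∈ D ⊓ fixingNhds p, act g =ᶠ[𝓝 p] act c}
  mul_mem' := by
    rintro g h ⟨c, hc, hgc⟩ ⟨d, hd, hhd⟩
    exact ⟨c * d, mul_mem hc hd, (hgc.fun_comp (act h)).trans (hhd.comp_tendsto hc.2.1)⟩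
  one_mem' := ⟨1, one_mem _, EventuallyEq.rfl⟩
  inv_mem' := by
    rintro g ⟨c, hc, hgc⟩
    refine ⟨c⁻¹, inv_mem hc, ?_⟩
    filter_upwards [inv_mul_mem_germTrivial hc.2 hgc] with ξ hξ
    exact act_inv_eq_of_act_eq hξ

end Action

section GermsOfGy

lemma px_replicate_false_mem_fixingNhds (j : ℕ) :
    px (List.replicate j false) ∈ fixingNhds fun _ => false := by
  refine ⟨tendsto_nhds_const_iff.2 fun n => ⟨j + (n + 2), fun η => ?_⟩,
    tendsto_nhds_const_iff.2 fun n => ⟨j + (n + 1), fun η => ?_⟩⟩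
  · rw [act_px_rep_false]
    exact rep_mem_cylinder (by omega) η
  · rw [act_inv_eq_of_act_eq (act_px_rep_false j n η)]
    exact rep_mem_cylinder (by omega) η

lemma px_replicate_true_mem_fixingNhds (j : ℕ) :
    px (List.replicate j true) ∈ fixingNhds fun _ => true := by
  refine ⟨tendsto_nhds_const_iff.2 fun n => ⟨j + (n + 1), fun η => ?_⟩,
    tendsto_nhds_const_iff.2 fun n => ⟨j + (n + 2), fun η => ?_⟩⟩
  · rw [act_px_rep_true]
    exact rep_mem_cylinder (by omega) η
  · rw [act_inv_eq_of_act_eq (act_px_rep_true j n η)]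
    exact rep_mem_cylinder (by omega) η

lemma py_replicate_true_mem_fixingNhds (j : ℕ) :
    py (List.replicate j true) ∈ fixingNhds fun _ => true := by
  refine ⟨tendsto_nhds_const_iff.2 fun n => ⟨j + n, fun η => ?_⟩,
    tendsto_nhds_const_iff.2 fun n => ⟨j + 2 * n, fun η => ?_⟩⟩
  · rw [act_py_rep_true]
    exact rep_mem_cylinder (by omega) _
  · rw [act_py_inv_rep_true]
    exact rep_mem_cylinder (by omega) _

lemma act_px_replicate_true_eventuallyEq (j : ℕ) :
    act (px (List.replicate j true)) =ᶠ[𝓝 fun _ => true] act (px (List.replicate 1 true)) := by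
  refine eventually_nhds_const_iff.2 ⟨j + 2, fun η => ?_⟩
  have h₁ := act_px_rep_true 1 j η
  rw [show 1 + (j + 1) = j + (1 + 1) by omega, show 1 + (j + 2) = j + (1 + 2) by omega] at h₁
  rw [h₁]
  exact act_px_rep_true j 1 η

lemma Gy_le_fixingNhds_false : Gy ≤ fixingNhds fun _ => false := by
  refine (Subgroup.closure_le _).2 ?_
  rintro _ (⟨s, rfl⟩ | ⟨t, ht, rfl⟩)
  · by_cases hs : allFalse s
    · rw [List.eq_replicate_iff.2 ⟨rfl, hs⟩]
      exact px_replicate_false_mem_fixingNhds _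
    · exact mem_fixingNhds_of_mem_germTrivial (localize_eventuallyEq_id hs _)
  · exact mem_fixingNhds_of_mem_germTrivial (localize_eventuallyEq_id ht _)

lemma Gy_le_germSubgroup_true :
    Gy ≤ germSubgroup (fun _ => true) (Gy ⊓ rigidStabilizer (cylinder (fun _ => true) 1)) := by
  refine (Subgroup.closure_le _).2 ?_
  rintro _ (⟨s, rfl⟩ | ⟨t, ht, rfl⟩)
  · by_cases hs : allTrue s
    · refine ⟨px (List.replicate 1 true), ⟨⟨px_mem _ _, op_localize_mem_rigidStabilizer
        (hasPrefix_replicate_subset_cylinder le_rfl) _⟩,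
        px_replicate_true_mem_fixingNhds 1⟩, ?_⟩
      rw [List.eq_replicate_iff.2 ⟨rfl, hs⟩]
      exact act_px_replicate_true_eventuallyEq _
    · exact ⟨1, one_mem _, localize_eventuallyEq_id hs _⟩
  · by_cases ht' : allTrue t
    · obtain ⟨j, rfl⟩ : ∃ j, t = List.replicate (j + 1) true := by
        rcases t with _ | ⟨c, t⟩
        · exact absurd (fun _ h => by simp at h) ht
        · exact ⟨t.length, List.eq_replicate_iff.2 ⟨rfl, ht'⟩⟩
      exact ⟨_, ⟨⟨py_mem ht, op_localize_mem_rigidStabilizer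
        (hasPrefix_replicate_subset_cylinder (by omega)) _⟩,
        py_replicate_true_mem_fixingNhds _⟩, EventuallyEq.rfl⟩
    · exact ⟨1, one_mem _, localize_eventuallyEq_id ht' _⟩

lemma act_pow_rep_false {q : M} (hq : q ∈ rigidStabilizer (cylinder (fun _ => true) 1))
    (n i : ℕ) (η : Seq) :
    act ((px (List.replicate 1 false) * q) ^ i) (rep false (n + 2 + i) η) =
      rep false (n + 2) η := by
  induction i with
  | zero => rfl
  | succ i ih =>
    have hx := act_px_rep_false 1 (n + i) η
    rw [show 1 + (n + i + 2) = n + 2 + (i + 1) by omega,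
      show 1 + (n + i + 1) = n + 2 + i by omega] at hx
    have hfalse : rep false (n + 2 + i) η ∈ cylinder (fun _ => false) 1 :=
      rep_mem_cylinder (by omega) η
    rw [pow_succ', act_mul, act_mul, Function.comp_apply, Function.comp_apply, hx,
      hq _ (disjoint_cylinder_false_true.notMem_of_mem_left hfalse), ih]

lemma pow_mul_px_mul_inv {q : M} (hq : q ∈ rigidStabilizer (cylinder (fun _ => true) 1))
    (n i : ℕ) :
    (px (List.replicate 1 false) * q) ^ i * px (List.replicate (n + 2) false) *
        ((px (List.replicate 1 false) * q) ^ i)⁻¹ = px (List.replicate (n + 2 + i) false) :=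
  mul_op_localize_mul_inv (act_pow_rep_false hq n i) xPerm

end GermsOfGy

def xZeros (j : ℕ) : ↥Gy := ⟨px (List.replicate j false), px_mem gySet _⟩

lemma replicate_succ_true_mem_gySet (j : ℕ) : List.replicate (j + 1) true ∈ gySet :=
  fun h => by simpa using h true (List.mem_replicate.2 ⟨by omega, rfl⟩)

/-- `yOnes j = y_{1^{j+1}}`, shifted because `y_∅ ∉ G_y`. -/
def yOnes (j : ℕ) : ↥Gy :=
  ⟨py (List.replicate (j + 1) true), py_mem (replicate_succ_true_mem_gySet j)⟩

lemma pow_mul_xZeros_zpow_mul_inv_mem_rigidStabilizer (t σ : ℤ) (R : ℕ) :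
    (((xZeros 1 * yOnes 0 ^ t) ^ R * xZeros 2 ^ σ * ((xZeros 1 * yOnes 0 ^ t) ^ R)⁻¹ : ↥Gy) :
      M) ∈ rigidStabilizer (cylinder (fun _ => false) (R + 2)) := by
  have hq : ((yOnes 0 ^ t : ↥Gy) : M) ∈ rigidStabilizer (cylinder (fun _ => true) 1) :=
    zpow_mem (op_localize_mem_rigidStabilizer (hasPrefix_replicate_subset_cylinder le_rfl) _) t
  have hconj : (((xZeros 1 * yOnes 0 ^ t) ^ R * xZeros 2 * ((xZeros 1 * yOnes 0 ^ t) ^ R)⁻¹ :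
      ↥Gy) : M) = px (List.replicate (0 + 2 + R) false) :=
    pow_mul_px_mul_inv hq 0 R
  rw [← conj_zpow, SubgroupClass.coe_zpow, hconj]
  exact zpow_mem (op_localize_mem_rigidStabilizer
    (hasPrefix_replicate_subset_cylinder (by omega)) _) σ

section Gy

variable {S : Set ↥Gy} {χ : ↥Gy → ℝ} {a b : ℝ} (hχ : IsAddChar χ)
  (hS : Subgroup.closure S = ⊤) (ha : a ≠ 0) (hb : b ≠ 0) (hx : ∀ j, χ (xZeros j) = a)
  (hy : ∀ j, χ (yOnes j) = b)
include hχ hS ha hb hx hy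

lemma exists_coneReach_pos_mem_rigidStabilizer_false :
    ∃ Z : ↥Gy, ConeReach S χ 0 Z ∧ 0 < χ Z ∧
      (Z : M) ∈ rigidStabilizer (cylinder (fun _ => false) 1) := by
  obtain ⟨z, hz, hz0⟩ := exists_coneReach_pos hχ hS (g := xZeros 0) (by rw [hx]; exact ha)
  obtain ⟨t, ht⟩ := exists_int_lt_mul hb (-a)
  obtain ⟨σ, hσ⟩ := exists_int_lt_mul ha 0
  have hP : 0 ≤ χ (xZeros 1 * yOnes 0 ^ t) := by rw [hχ, hχ.map_zpow, hx, hy]; linarith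
  have hθ : 0 < χ (xZeros 2 ^ σ) := by rw [hχ.map_zpow, hx]; linarith
  obtain ⟨rP, hrP⟩ := exists_coneReach hχ hS (xZeros 1 * yOnes 0 ^ t)
  obtain ⟨rθ, hrθ⟩ := exists_coneReach hχ hS (xZeros 2 ^ σ)
  obtain ⟨B, hB⟩ := exists_coneReach_pow_mul_mul_inv hχ hrP hP hrθ
  obtain ⟨K, hK⟩ := Archimedean.arch (-B) hz0
  rw [nsmul_eq_mul] at hK
  obtain ⟨R, hR⟩ := tendsto_nhds_const_iff.1 (Gy_le_fixingNhds_false (z ^ K)⁻¹.2).1 1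
  refine ⟨_, hz.pow_mul_mul_inv hχ hz0.le (hB R) (by rw [hχ.map_conj]; linarith)
    (by linarith), by rw [hχ.map_conj, hχ.map_conj]; exact hθ, ?_⟩
  push_cast
  refine mul_mul_inv_mem_rigidStabilizer
    (pow_mul_xZeros_zpow_mul_inv_mem_rigidStabilizer t σ R) fun ξ hξ => ?_
  obtain ⟨η, rfl⟩ : ξ ∈ range (rep false R) :=
    cylinder_const_eq_range false R ▸ cylinder_anti _ (by omega) hξ
  simpa using hR η

lemma coneReach_of_mem_rigidStabilizer_true {g : ↥Gy}
    (hg : (g : M) ∈ rigidStabilizer (cylinder (fun _ => true) 1)) (hg0 : 0 ≤ χ g) :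
    ConeReach S χ 0 g := by
  obtain ⟨Z, hZ, hZ0, hZsupp⟩ :=
    exists_coneReach_pos_mem_rigidStabilizer_false hχ hS ha hb hx hy
  exact hZ.of_commute hχ hS hZ0
    (Subtype.ext (commute_of_disjoint hZsupp hg disjoint_cylinder_false_true).eq) hg0

lemma coneReach_of_mem_germTrivial_true {g : ↥Gy} (hg : (g : M) ∈ germTrivial fun _ => true)
    (hg0 : 0 ≤ χ g) : ConeReach S χ 0 g := by
  obtain ⟨T, hT⟩ := eventually_nhds_const_iff.1 hg
  obtain ⟨τ, hτ⟩ := exists_int_lt_mul hb 0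
  have hY : (yOnes T ^ τ : M) ∈ rigidStabilizer (cylinder (fun _ => true) (T + 1)) :=
    zpow_mem (op_localize_mem_rigidStabilizer (hasPrefix_replicate_subset_cylinder le_rfl) _) τ
  have hY0 : 0 < χ (yOnes T ^ τ) := by rw [hχ.map_zpow, hy]; linarith
  have hYg : Commute (yOnes T ^ τ) g := by
    refine Subtype.ext (commute_of_mem_rigidStabilizer
      (rigidStabilizer_mono (cylinder_anti _ T.le_succ) hY) fun ξ hξ => ?_).eq
    obtain ⟨η, rfl⟩ : ξ ∈ range (rep true T) := cylinder_const_eq_range true T ▸ hξ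
    exact hT η
  exact (coneReach_of_mem_rigidStabilizer_true hχ hS ha hb hx hy
    (rigidStabilizer_mono (cylinder_anti _ (by omega)) hY) hY0.le).of_commute hχ hS hY0 hYg hg0

lemma coneReach_of_nonneg (g : ↥Gy) (hg : 0 ≤ χ g) : ConeReach S χ 0 g := by
  obtain ⟨c, ⟨⟨hcGy, hcU⟩, hcN⟩, hgc⟩ := Gy_le_germSubgroup_true g.2
  set C := (rigidStabilizer (cylinder (fun _ => true) 1)).comap Gy.subtype
  set A := (germTrivial fun _ => true).comap Gy.subtype
  have hC : ∀ x ∈ C, 0 ≤ χ x → ConeReach S χ 0 x := fun _ hmem =>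
    coneReach_of_mem_rigidStabilizer_true hχ hS ha hb hx hy hmem
  have hA : ∀ x ∈ A, 0 ≤ χ x → ConeReach S χ 0 x := fun _ hmem =>
    coneReach_of_mem_germTrivial_true hχ hS ha hb hx hy hmem
  set c' : ↥Gy := ⟨c, hcGy⟩
  have hgc' : χ (g * c'⁻¹) + χ c' = χ g := by rw [← hχ, inv_mul_cancel_right]
  rcases le_or_gt 0 (χ (g * c'⁻¹)) with hm | hm
  · simpa using (hA _ (mul_inv_mem_germTrivial hgc) hm).mul_of_forall_mem hχ hC hm
      (show c' ∈ C from hcU) (by simpa using hg)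
  · simpa using (hC c' hcU (by linarith)).mul_of_forall_mem hχ hA (by linarith)
      (show c'⁻¹ * g ∈ A from inv_mul_mem_germTrivial hcN hgc) (by simpa using hg)

end Gy

theorem most_of_equator_Gy_general
    (χ0 ψ1 ψ : ↥Gy → ℝ) (h0 : Chi0Spec gySet χ0) (h1 : Psi1Spec gySet ψ1)
    (a b c : ℝ) (hc : c = 0) (ha : a ≠ 0) (hb : b ≠ 0) :
    ∀ S : Set ↥Gy, S.Finite → Subgroup.closure S = ⊤ →
      (posSubgraph S (fun g => a * χ0 g + b * ψ1 g + c * ψ g)).Connected := by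
  intro S _ hS
  subst hc
  have hχ : IsAddChar fun g => a * χ0 g + b * ψ1 g + 0 * ψ g := fun g h => by
    have e0 : χ0 (g * h) = χ0 g + χ0 h := h0.1 g h
    have e1 : ψ1 (g * h) = ψ1 g + ψ1 h := h1.1 g h
    simp only [e0, e1]
    ring
  refine posSubgraph_connected_of_coneReach hχ
    (coneReach_of_nonneg hχ hS (neg_ne_zero.2 ha) hb (fun j => ?_) (fun j => ?_))
  · have e0 : χ0 (xZeros j) = -1 := h0.2.1 _ fun _ => List.eq_of_mem_replicate
    have e1 : ψ1 (xZeros j) = 0 := h1.2.1 _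
    simp only [e0, e1]
    ring
  · have hmem := replicate_succ_true_mem_gySet j
    have e0 : χ0 (yOnes j) = 0 := h0.2.2.2 _ hmem
    have e1 : ψ1 (yOnes j) = 1 := h1.2.2.1 _ hmem fun _ => List.eq_of_mem_replicate
    simp only [e0, e1]
    ring

/-- Let `χ = aχ₀ + bψ₁ + cψ` be a character of `G_y` with `c = 0`, `a ≠ 0` and `b ≠ 0`.
Then `[χ] ∈ Σ¹(G_y)`: for any finite generating set `S` of `G_y`, the full subgraph of
the Cayley graph spanned by `{h : χ(h) ≥ 0}` is connected. -/
theorem most_of_equator_Gy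
    (χ0 ψ1 ψ : ↥Gy → ℝ) (h0 : Chi0Spec gySet χ0) (h1 : Psi1Spec gySet ψ1)
    (h : PsiSpec gySet ψ) (a b c : ℝ) (hc : c = 0) (ha : a ≠ 0) (hb : b ≠ 0) :
    ∀ S : Set ↥Gy, S.Finite → Subgroup.closure S = ⊤ →
      (posSubgraph S (fun g => a * χ0 g + b * ψ1 g + c * ψ g)).Connected :=
  most_of_equator_Gy_general χ0 ψ1 ψ h0 h1 a b c hc ha hb

end LodhaMoore
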